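/- arXiv:2402.12931 — 2 statements merged into one kernel-verified Lean document; each statement's English description precedes it below -/
import Mathlib

section
/- There are exactly 2^ℵ₀ Epstein-incomplete extensions of F: for each nonempty S ⊆ ω\{0}, the logic FΛ_S with Λ_S = {q ↪ p^n : n ∈ S} (where p^0 := q ↪ p and p^{n+1} := p → p^n) is Epstein incomplete, and distinct nonempty S, T ⊆ ω\{0} yield distinct logics. -/
/-- Epstein formulas: letters, ¬, ∨, ∧, →, ↔, △ (tri), ↪ (hook). -/
inductive EFor : Type
  | var : ℕ → EFor
  | neg : EFor → EFor
  | or : EFor → EFor → EFor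
  | and : EFor → EFor → EFor
  | imp : EFor → EFor → EFor
  | iff : EFor → EFor → EFor
  | tri : EFor → EFor → EFor
  | hook : EFor → EFor → EFor
  deriving DecidableEq

/-- An Epstein model: a valuation of letters and a binary relation on formulas. -/
structure EModel : Type where
  v : ℕ → Prop
  R : Set (EFor × EFor)

/-- Epstein satisfaction. -/
def sat (M : EModel) : EFor → Prop
  | .var n => M.v n
  | .neg φ => ¬ sat M φ
  | .or φ ψ => sat M φ ∨ sat M ψ
  | .and φ ψ => sat M φ ∧ sat M ψ
  | .imp φ ψ => sat M φ → sat M ψ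
  | .iff φ ψ => (sat M φ ↔ sat M ψ)
  | .tri φ ψ => (sat M φ ∧ sat M ψ) ∧ (φ, ψ) ∈ M.R
  | .hook φ ψ => (sat M φ → sat M ψ) ∧ (φ, ψ) ∈ M.R

/-- The Omega set of a model. -/
def Omega (M : EModel) : Set (EFor × EFor) :=
  {p | ¬ sat M (.imp p.1 p.2)}

/-- The S-set of a model. -/
def Sset (M : EModel) : Set EModel :=
  {N | N.v = M.v ∧ M.R \ Omega M ⊆ N.R ∧ N.R ⊆ M.R ∪ Omega M}

/-- The theory of a model. -/
def Th (M : EModel) : Set EFor := {φ | sat M φ}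

/-- Substitution: extend a map on letters homomorphically. -/
def esubst (σ : ℕ → EFor) : EFor → EFor
  | .var n => σ n
  | .neg φ => .neg (esubst σ φ)
  | .or φ ψ => .or (esubst σ φ) (esubst σ ψ)
  | .and φ ψ => .and (esubst σ φ) (esubst σ ψ)
  | .imp φ ψ => .imp (esubst σ φ) (esubst σ ψ)
  | .iff φ ψ => .iff (esubst σ φ) (esubst σ ψ)
  | .tri φ ψ => .tri (esubst σ φ) (esubst σ ψ)
  | .hook φ ψ => .hook (esubst σ φ) (esubst σ ψ)

/-- A boolean homomorphism: any assignment respecting the boolean connectives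
(no constraint on △, ↪, which are treated as atoms). -/
def BoolHom (w : EFor → Prop) : Prop :=
  (∀ φ, w (.neg φ) ↔ ¬ w φ) ∧
  (∀ φ ψ, w (.or φ ψ) ↔ (w φ ∨ w ψ)) ∧
  (∀ φ ψ, w (.and φ ψ) ↔ (w φ ∧ w ψ)) ∧
  (∀ φ ψ, w (.imp φ ψ) ↔ (w φ → w ψ)) ∧
  (∀ φ ψ, w (.iff φ ψ) ↔ (w φ ↔ w ψ))

/-- Classical tautologies in the language of Epstein logic. -/
def Taut (φ : EFor) : Prop := ∀ w, BoolHom w → w φ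

/-- The logic FΛ: least set containing CPL, the two Epstein axioms and Λ,
closed under uniform substitution and modus ponens. -/
inductive FLam (Λ : Set EFor) : EFor → Prop
  | taut {φ} : Taut φ → FLam Λ φ
  | ax1 : FLam Λ (.imp (.hook (.var 0) (.var 1)) (.imp (.var 0) (.var 1)))
  | ax2 : FLam Λ (.iff (.tri (.var 0) (.var 1))
      (.and (.hook (.var 0) (.var 1)) (.and (.var 0) (.var 1))))
  | extra {φ} : φ ∈ Λ → FLam Λ φ
  | subst {φ} (σ : ℕ → EFor) : FLam Λ φ → FLam Λ (esubst σ φ)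
  | mp {φ ψ} : FLam Λ (.imp φ ψ) → FLam Λ φ → FLam Λ ψ

/-- The base logic F. -/
def Fmem : EFor → Prop := FLam ∅

/-- Hilbert derivability from premises Γ over a logic L. -/
inductive Deriv (L : EFor → Prop) (Γ : Set EFor) : EFor → Prop
  | thm {φ} : L φ → Deriv L Γ φ
  | prem {φ} : φ ∈ Γ → Deriv L Γ φ
  | mp {φ ψ} : Deriv L Γ (.imp φ ψ) → Deriv L Γ φ → Deriv L Γ ψ

/-- Validity on a relation: true in all models built over it. -/
def relSat (R : Set (EFor × EFor)) (φ : EFor) : Prop :=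
  ∀ v : ℕ → Prop, sat ⟨v, R⟩ φ

def etop : EFor := .or (.var 0) (.neg (.var 0))
def ebot : EFor := .neg etop

/-- p^0 := q ↪ p, p^{n+1} := p → p^n. -/
def qTow : ℕ → EFor
  | 0 => .hook (.var 1) (.var 0)
  | n + 1 => .imp (.var 0) (qTow n)

/-- Λ_S = {q ↪ p^n : n ∈ S}. -/
def LamS (S : Set ℕ) : Set EFor := {χ | ∃ n ∈ S, χ = .hook (.var 1) (qTow n)}

def FLamSet (Λ : Set EFor) : Set EFor := {φ | FLam Λ φ}

/-- A logic: an extension of F closed under substitution and modus ponens. -/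
def IsLogic (L : Set EFor) : Prop :=
  (∀ φ, Fmem φ → φ ∈ L) ∧ (∀ φ (σ : ℕ → EFor), φ ∈ L → esubst σ φ ∈ L) ∧
  (∀ φ ψ, EFor.imp φ ψ ∈ L → φ ∈ L → ψ ∈ L)

/-- Epstein incompleteness: no adequate set of Epstein relations. -/
def EpsteinIncomplete (L : Set EFor) : Prop :=
  ¬ ∃ X : Set (Set (EFor × EFor)), L = {φ | ∀ R ∈ X, relSat R φ}


/-!
Every formula `q ↪ pⁿ` with `n ≥ 1` is classically equivalent to `p → (q ↪ p)`, so it is true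
under the valuation making every letter true exactly when `(q, p) ∈ R`. Hence any relation
validating `FΛ_S` contains `(q, p)` and validates `(q → p) → (q ↪ p)`. That formula is not in
`FΛ_S`, nor is `q ↪ pⁿ` for `n ∉ S`: both fail in the model with every letter false whose
relation omits only the pair `(q, p)`, respectively `(q, pⁿ)`, while all substitution instances
of `Λ_S` hold there. So the `FΛ_S` are pairwise distinct and Epstein incomplete, which gives
`2^ℵ₀` of them; there are at most that many sets of formulas.
-/

lemma esubst_esubst (σ τ : ℕ → EFor) (φ : EFor) :
    esubst σ (esubst τ φ) = esubst (fun n => esubst σ (τ n)) φ := by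
  induction φ <;> simp [esubst, *]

lemma esubst_var (φ : EFor) : esubst .var φ = φ := by
  induction φ <;> simp [esubst, *]

lemma boolHom_sat_esubst (M : EModel) (σ : ℕ → EFor) :
    BoolHom (fun φ => sat M (esubst σ φ)) := by
  refine ⟨?_, ?_, ?_, ?_, ?_⟩ <;> intros <;> rfl

lemma FLam.sat_esubst {Λ : Set EFor} {M : EModel}
    (hΛ : ∀ χ ∈ Λ, ∀ σ, sat M (esubst σ χ)) {φ : EFor} (hφ : FLam Λ φ) :
    ∀ σ, sat M (esubst σ φ) := by
  induction hφ with
  | taut ht => exact fun σ => ht _ (boolHom_sat_esubst M σ)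
  | ax1 => intro σ; simp only [esubst, sat]; tauto
  | ax2 => intro σ; simp only [esubst, sat]; tauto
  | extra hχ => exact hΛ _ hχ
  | subst τ _ ih => intro σ; rw [esubst_esubst]; exact ih _
  | mp _ _ ih₁ ih₂ => exact fun σ => ih₁ σ (ih₂ σ)

lemma FLam.sat {Λ : Set EFor} {M : EModel}
    (hΛ : ∀ χ ∈ Λ, ∀ σ, sat M (esubst σ χ)) {φ : EFor} (hφ : FLam Λ φ) : sat M φ := by
  simpa only [esubst_var] using hφ.sat_esubst hΛ .var

lemma FLam.mono {Λ Λ' : Set EFor} (h : Λ ⊆ Λ') {φ : EFor} (hφ : FLam Λ φ) : FLam Λ' φ := by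
  induction hφ with
  | taut ht => exact .taut ht
  | ax1 => exact .ax1
  | ax2 => exact .ax2
  | extra hχ => exact .extra (h hχ)
  | subst σ _ ih => exact .subst σ ih
  | mp _ _ ih₁ ih₂ => exact .mp ih₁ ih₂

lemma isLogic_FLamSet (Λ : Set EFor) : IsLogic (FLamSet Λ) :=
  ⟨fun _ h => h.mono (Set.empty_subset _), fun _ σ h => .subst σ h, fun _ _ h₁ h₂ => .mp h₁ h₂⟩

lemma sat_esubst_qTow_succ (M : EModel) (σ : ℕ → EFor) (n : ℕ) :
    sat M (esubst σ (qTow (n + 1))) ↔ (sat M (σ 0) → (σ 1, σ 0) ∈ M.R) := by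
  induction n with
  | zero => simp only [qTow, esubst, sat]; tauto
  | succ k ih => exact ⟨fun h h₀ => ih.1 (h h₀) h₀, fun h _ => ih.2 h⟩

lemma esubst_qTow_ne_var (σ : ℕ → EFor) (n k : ℕ) : esubst σ (qTow n) ≠ .var k := by
  cases n <;> simp [qTow, esubst]

lemma eq_of_esubst_qTow_eq_qTow {σ : ℕ → EFor} {m n : ℕ} (h : esubst σ (qTow m) = qTow n) :
    m = n := by
  induction m generalizing n with
  | zero => cases n <;> simp_all [qTow, esubst]
  | succ j ih =>
    cases n with
    | zero => simp [qTow, esubst] at h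
    | succ k =>
      simp only [qTow, esubst, EFor.imp.injEq] at h
      exact congrArg Nat.succ (ih h.2)

lemma exists_eq_succ_of_mem {S : Set ℕ} (h0 : 0 ∉ S) {n : ℕ} (hn : n ∈ S) : ∃ k, n = k + 1 :=
  Nat.exists_eq_succ_of_ne_zero fun e => h0 (e ▸ hn)

def allButModel (pr : EFor × EFor) : EModel := ⟨fun _ => False, {pr}ᶜ⟩

lemma not_sat_hook_allButModel (φ ψ : EFor) : ¬ sat (allButModel (φ, ψ)) (.hook φ ψ) :=
  fun h => h.2 rfl

/-- `q ↪ pⁿ` holds in `allButModel (q, x)` unless `x` is itself an instance of `pⁿ`. -/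
lemma sat_allButModel_of_FLam {S : Set ℕ} (h0 : 0 ∉ S) {x : EFor}
    (hx : ∀ σ, ∀ n ∈ S, esubst σ (qTow n) ≠ x) {φ : EFor} (hφ : FLam (LamS S) φ) :
    sat (allButModel (.var 1, x)) φ := by
  refine hφ.sat ?_
  rintro _ ⟨n, hn, rfl⟩ σ
  obtain ⟨k, rfl⟩ := exists_eq_succ_of_mem h0 hn
  refine ⟨fun hq => (sat_esubst_qTow_succ _ σ k).2 fun _ hpair => ?_, fun hpair => ?_⟩
  · have hσ : σ 1 = .var 1 := congrArg Prod.fst (Set.mem_singleton_iff.1 hpair)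
    rw [esubst, hσ] at hq
    exact hq
  · exact hx σ _ hn (congrArg Prod.snd (Set.mem_singleton_iff.1 hpair))

lemma hook_qTow_mem_FLamSet_iff {S : Set ℕ} (h0 : 0 ∉ S) (n : ℕ) :
    EFor.hook (.var 1) (qTow n) ∈ FLamSet (LamS S) ↔ n ∈ S := by
  refine ⟨fun h => ?_, fun hn => FLam.extra ⟨n, hn, rfl⟩⟩
  by_contra hn
  refine not_sat_hook_allButModel _ _ (sat_allButModel_of_FLam h0 ?_ h)
  exact fun σ m hm e => hn (eq_of_esubst_qTow_eq_qTow e ▸ hm)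

lemma eq_of_FLamSet_LamS_eq {S T : Set ℕ} (hS : 0 ∉ S) (hT : 0 ∉ T)
    (h : FLamSet (LamS S) = FLamSet (LamS T)) : S = T := by
  ext n
  rw [← hook_qTow_mem_FLamSet_iff hS, ← hook_qTow_mem_FLamSet_iff hT, h]

lemma imp_imp_hook_not_mem_FLamSet {S : Set ℕ} (h0 : 0 ∉ S) :
    EFor.imp (.imp (.var 1) (.var 0)) (.hook (.var 1) (.var 0)) ∉ FLamSet (LamS S) := by
  intro h
  have := sat_allButModel_of_FLam h0 (fun σ n _ => esubst_qTow_ne_var σ n 0) h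
  exact not_sat_hook_allButModel _ _ (this False.elim)

lemma mem_of_relSat_hook_qTow_succ {R : Set (EFor × EFor)} {n : ℕ}
    (h : relSat R (.hook (.var 1) (qTow (n + 1)))) : (EFor.var 1, EFor.var 0) ∈ R := by
  have htow := (h fun _ => True).1 trivial
  rw [← esubst_var (qTow (n + 1)), sat_esubst_qTow_succ] at htow
  exact htow trivial

lemma epsteinIncomplete_FLamSet_LamS {S : Set ℕ} (hne : S.Nonempty) (h0 : 0 ∉ S) :
    EpsteinIncomplete (FLamSet (LamS S)) := by
  rintro ⟨X, hX⟩
  obtain ⟨n, hn⟩ := hne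
  obtain ⟨k, rfl⟩ := exists_eq_succ_of_mem h0 hn
  have hmem : EFor.hook (.var 1) (qTow (k + 1)) ∈ FLamSet (LamS S) := FLam.extra ⟨k + 1, hn, rfl⟩
  rw [hX] at hmem
  apply imp_imp_hook_not_mem_FLamSet h0
  rw [hX]
  exact fun R hR _ himp => ⟨himp, mem_of_relSat_hook_qTow_succ (hmem R hR)⟩

def EFor.encode : EFor → ℕ
  | .var n => Nat.pair 0 n
  | .neg φ => Nat.pair 1 φ.encode
  | .or φ ψ => Nat.pair 2 (Nat.pair φ.encode ψ.encode)
  | .and φ ψ => Nat.pair 3 (Nat.pair φ.encode ψ.encode)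
  | .imp φ ψ => Nat.pair 4 (Nat.pair φ.encode ψ.encode)
  | .iff φ ψ => Nat.pair 5 (Nat.pair φ.encode ψ.encode)
  | .tri φ ψ => Nat.pair 6 (Nat.pair φ.encode ψ.encode)
  | .hook φ ψ => Nat.pair 7 (Nat.pair φ.encode ψ.encode)

lemma EFor.encode_injective : Function.Injective EFor.encode := by
  intro φ ψ h
  induction φ generalizing ψ <;> cases ψ <;> grind [EFor.encode, Nat.pair_eq_pair]

instance : Countable EFor := EFor.encode_injective.countable

lemma mk_set_EFor_le : Cardinal.mk (Set EFor) ≤ 2 ^ Cardinal.aleph0 := by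
  rw [Cardinal.mk_set]
  exact Cardinal.power_le_power_left two_ne_zero Cardinal.mk_le_aleph0

def shiftAddOne (A : Set ℕ) : Set ℕ := insert 1 ((· + 2) '' A)

lemma zero_not_mem_shiftAddOne (A : Set ℕ) : 0 ∉ shiftAddOne A := by
  simp [shiftAddOne]

lemma add_two_mem_shiftAddOne {A : Set ℕ} {n : ℕ} : n + 2 ∈ shiftAddOne A ↔ n ∈ A := by
  simp [shiftAddOne]

lemma shiftAddOne_injective : Function.Injective shiftAddOne := fun A B h => by
  ext n
  rw [← add_two_mem_shiftAddOne, h, add_two_mem_shiftAddOne]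

/-- each FΛ_S is Epstein incomplete, distinct S give distinct
logics, and there are exactly 2^ℵ₀ Epstein-incomplete extensions of F. -/
theorem stmt13 :
    (∀ S : Set ℕ, S.Nonempty → 0 ∉ S → EpsteinIncomplete (FLamSet (LamS S))) ∧
    (∀ S T : Set ℕ, S.Nonempty → T.Nonempty → 0 ∉ S → 0 ∉ T → S ≠ T →
      FLamSet (LamS S) ≠ FLamSet (LamS T)) ∧
    Cardinal.mk (↥{L : Set EFor | IsLogic L ∧ EpsteinIncomplete L})
      = 2 ^ Cardinal.aleph0 := by
  refine ⟨fun S hne h0 => epsteinIncomplete_FLamSet_LamS hne h0,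
    fun S T _ _ hS hT hST h => hST (eq_of_FLamSet_LamS_eq hS hT h), le_antisymm ?_ ?_⟩
  · exact (Cardinal.mk_subtype_le _).trans mk_set_EFor_le
  · let logicOf (A : Set ℕ) : {L : Set EFor | IsLogic L ∧ EpsteinIncomplete L} :=
      ⟨FLamSet (LamS (shiftAddOne A)), isLogic_FLamSet _,
        epsteinIncomplete_FLamSet_LamS (Set.insert_nonempty _ _) (zero_not_mem_shiftAddOne A)⟩
    have hinj : Function.Injective logicOf := fun A B h => shiftAddOne_injective
      (eq_of_FLamSet_LamS_eq (zero_not_mem_shiftAddOne A) (zero_not_mem_shiftAddOne B)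
        (congrArg Subtype.val h))
    calc (2 : Cardinal) ^ Cardinal.aleph0 = Cardinal.mk (Set ℕ) := by
          rw [Cardinal.mk_set, Cardinal.mk_nat]
      _ ≤ _ := Cardinal.mk_le_of_injective hinj
end

section
/- The language of Epstein formulas does not express the Epstein relation: it is not the case that for every R ⊆ FOR² and every pair (φ,ψ) there exists a formula χ such that (φ,ψ) ∈ R iff R ⊨ χ. In particular, no formula χ satisfies: for all R, R ⊨ χ iff (⊤,⊥) ∈ R. -/
/-! The truth value of `φ △ ψ` and of `φ ↪ ψ` at a pair with `φ` true and `ψ` false is `False`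
whatever the relation says about that pair, so changing the relation inside the Omega set of a
model does not change which formulas it satisfies. Since `(⊤, ⊥)` lies in every Omega set, the
relations `{(⊤, ⊥)}` and `∅` validate the same formulas, and no formula can express
`(⊤, ⊥) ∈ R`. -/

lemma sat_iff_of_mem_Sset {M N : EModel} (hN : N ∈ Sset M) (χ : EFor) :
    sat N χ ↔ sat M χ := by
  obtain ⟨hv, hRΩ, hNR⟩ := hN
  have mem_iff {φ ψ : EFor} (hΩ : (φ, ψ) ∉ Omega M) : (φ, ψ) ∈ N.R ↔ (φ, ψ) ∈ M.R :=
    ⟨fun h => (hNR h).resolve_right hΩ, fun h => hRΩ ⟨h, hΩ⟩⟩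
  induction χ with
  | var n => simp only [sat, hv]
  | neg φ ih => simp only [sat, ih]
  | or φ ψ ih₁ ih₂ | and φ ψ ih₁ ih₂ | imp φ ψ ih₁ ih₂ | iff φ ψ ih₁ ih₂ =>
    simp only [sat, ih₁, ih₂]
  | tri φ ψ ih₁ ih₂ | hook φ ψ ih₁ ih₂ =>
    by_cases hΩ : (φ, ψ) ∈ Omega M
    · simp only [Omega, sat, Set.mem_ofPred_eq] at hΩ
      simp only [sat, ih₁, ih₂]
      tauto
    · simp only [sat, ih₁, ih₂, mem_iff hΩ]

lemma etop_ebot_mem_Omega (M : EModel) : (etop, ebot) ∈ Omega M := by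
  simp only [Omega, Set.mem_ofPred_eq, sat, etop, ebot]
  tauto

theorem not_exists_relSat_iff_etop_ebot_mem :
    ¬ ∃ χ : EFor, ∀ R : Set (EFor × EFor), relSat R χ ↔ (etop, ebot) ∈ R := by
  rintro ⟨χ, hχ⟩
  have hvalid : relSat {(etop, ebot)} χ := (hχ _).2 rfl
  have hempty : relSat ∅ χ := fun v => by
    have hS : (⟨v, ∅⟩ : EModel) ∈ Sset ⟨v, {(etop, ebot)}⟩ :=
      ⟨rfl, (Set.sdiff_eq_empty.2 (Set.singleton_subset_iff.2 (etop_ebot_mem_Omega _))).subset,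
        Set.empty_subset _⟩
    exact (sat_iff_of_mem_Sset hS χ).2 (hvalid v)
  exact (hχ ∅).1 hempty

/-- the Epstein language does not express the relation; in
particular no formula expresses (⊤,⊥) ∈ R. -/
theorem stmt16 :
    (¬ ∀ φ ψ : EFor, ∃ χ : EFor, ∀ R : Set (EFor × EFor),
        ((φ, ψ) ∈ R ↔ relSat R χ)) ∧
    ¬ ∃ χ : EFor, ∀ R : Set (EFor × EFor),
        (relSat R χ ↔ (etop, ebot) ∈ R) := by
  refine ⟨fun h => ?_, not_exists_relSat_iff_etop_ebot_mem⟩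
  obtain ⟨χ, hχ⟩ := h etop ebot
  exact not_exists_relSat_iff_etop_ebot_mem ⟨χ, fun R => (hχ R).symm⟩
end
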